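/- Let X be a set, let k ≥ 1, and let f_1, …, f_k : X → X be maps; for a word w ∈ {1,…,k}ⁿ write f_w for the corresponding n-fold composite, and for g : X → ℝ and Q ∈ X write S_n(g, Q) = Σ_{w ∈ {1,…,k}ⁿ} g(f_w(Q)). Let hX : X → ℝ with hX ≥ 1 pointwise, let h : X → ℝ, and let β > 0, C₃ ≥ 0, C ≥ 0, δ' ≥ 0, a ≥ 0, b ≥ 0 be real numbers with k²·δ' < β². Assume: (i) |Σ_{i=1}^k h(f_i(Q)) − β·h(Q)| ≤ C₃·√(hX(Q)) for all Q ∈ X; (ii) S_n(hX, Q) ≤ C·kⁿ·δ'ⁿ·hX(Q) for all n ≥ 0 and all Q ∈ X; (iii) |h(Q)| ≤ a·hX(Q) + b for all Q ∈ X. Let P ∈ X and let ĥ(P) = lim_{n→∞} β^{−n}·S_n(h, P) (this limit exists by (i) and (ii)). If ĥ(P) ≠ 0, then liminf_{n→∞} (1/k)·S_n(hX, P)^{1/n} ≥ β/k. -/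

import Mathlib

open Filter Topology

/-! Since `|h| ≤ (a + b)·hX`, we get `|S_n(h, P)| ≤ (a + b)·S_n(hX, P)`, and `S_n(h, P)/βⁿ → ĥ(P) ≠ 0`
forces `S_n(hX, P) ≥ c·βⁿ` eventually for some `c > 0`; taking `n`-th roots, `(c·βⁿ)^{1/n} → β`.
Hypothesis (ii) bounds `S_n(hX, P)` by `A·(kδ')ⁿ`, which keeps the `n`-th roots bounded above: without
that, the `liminf` in `ℝ` of an unbounded sequence would be the junk value `0`. -/

/-- `compWord f w P` is the composite `f_{w_1} ∘ ⋯ ∘ f_{w_n}` applied to `P`,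
for the word `w = (w_1, …, w_n)` over the alphabet `Fin k`. -/
def compWord {X : Type*} {k : ℕ} (f : Fin k → X → X) : List (Fin k) → X → X
  | [], P => P
  | i :: w, P => f i (compWord f w P)

/-- `heightSum f g n P = Σ_{w ∈ {1,…,k}ⁿ} g (f_w P)`, the sum over all `kⁿ` words of length `n`. -/
noncomputable def heightSum {X : Type*} {k : ℕ} (f : Fin k → X → X) (g : X → ℝ)
    (n : ℕ) (P : X) : ℝ :=
  ∑ w : Fin n → Fin k, g (compWord f (List.ofFn w) P)

section HeightSum

variable {X : Type*} {k : ℕ} (f : Fin k → X → X)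

@[simp]
theorem heightSum_zero (g : X → ℝ) (P : X) : heightSum f g 0 P = g P := by
  simp [heightSum, compWord]

theorem heightSum_nonneg {g : X → ℝ} (hg : ∀ Q, 0 ≤ g Q) (n : ℕ) (P : X) :
    0 ≤ heightSum f g n P :=
  Finset.sum_nonneg fun _ _ => hg _

theorem abs_heightSum_le {g g' : X → ℝ} {D : ℝ} (hg : ∀ Q, |g Q| ≤ D * g' Q) (n : ℕ) (P : X) :
    |heightSum f g n P| ≤ D * heightSum f g' n P := by
  rw [heightSum, heightSum, Finset.mul_sum]
  exact (Finset.abs_sum_le_sum_abs _ _).trans (Finset.sum_le_sum fun _ _ => hg _)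

end HeightSum

theorem tendsto_mul_pow_rpow_inv {A r : ℝ} (hA : 0 < A) (hr : 0 ≤ r) :
    Tendsto (fun n : ℕ => (A * r ^ n) ^ (n : ℝ)⁻¹) atTop (𝓝 r) := by
  have hroot : Tendsto (fun n : ℕ => A ^ (n : ℝ)⁻¹ * r) atTop (𝓝 r) := by
    simpa using ((Real.continuousAt_const_rpow hA.ne').tendsto.comp
      tendsto_inv_atTop_nhds_zero_nat).mul_const r
  refine hroot.congr' ?_
  filter_upwards [eventually_ne_atTop 0] with n hn
  rw [Real.mul_rpow hA.le (by positivity), Real.pow_rpow_inv_natCast hr hn]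

theorem le_liminf_const_mul_rpow_inv {s : ℕ → ℝ} {d c β A r : ℝ} (hd : 0 ≤ d) (hc : 0 < c)
    (hβ : 0 ≤ β) (hA : 0 < A) (hr : 0 ≤ r) (hlow : ∀ᶠ n in atTop, c * β ^ n ≤ s n)
    (hup : ∀ᶠ n in atTop, s n ≤ A * r ^ n) :
    d * β ≤ liminf (fun n : ℕ => d * s n ^ (n : ℝ)⁻¹) atTop := by
  have hlow_tendsto := (tendsto_mul_pow_rpow_inv hc hβ).const_mul d
  have hup_tendsto := (tendsto_mul_pow_rpow_inv hA hr).const_mul d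
  have hlow' : ∀ᶠ n : ℕ in atTop,
      d * (c * β ^ n) ^ (n : ℝ)⁻¹ ≤ d * s n ^ (n : ℝ)⁻¹ := by
    filter_upwards [hlow] with n hn
    gcongr
  have hup' : ∀ᶠ n : ℕ in atTop, d * s n ^ (n : ℝ)⁻¹ ≤ d * (A * r ^ n) ^ (n : ℝ)⁻¹ := by
    filter_upwards [hlow, hup] with n hn hn'
    gcongr
    exact (by positivity : 0 ≤ c * β ^ n).trans hn
  have hcobdd : IsCoboundedUnder (· ≥ ·) atTop fun n : ℕ => d * s n ^ (n : ℝ)⁻¹ :=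
    (hup_tendsto.isBoundedUnder_le.mono_le hup').isCoboundedUnder_ge
  calc d * β = liminf (fun n : ℕ => d * (c * β ^ n) ^ (n : ℝ)⁻¹) atTop :=
        hlow_tendsto.liminf_eq.symm
    _ ≤ _ := liminf_le_liminf hlow' hlow_tendsto.isBoundedUnder_ge hcobdd

theorem exists_pos_eventually_mul_pow_le {s t : ℕ → ℝ} {β L D : ℝ} (hβ : 0 < β)
    (hlim : Tendsto (fun n => s n / β ^ n) atTop (𝓝 L)) (hL : L ≠ 0)
    (hst : ∀ n, |s n| ≤ D * t n) (ht : ∀ n, 0 ≤ t n) :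
    ∃ c > 0, ∀ᶠ n in atTop, c * β ^ n ≤ t n := by
  obtain ⟨N, hN⟩ := eventually_atTop.1 <|
    hlim.abs.eventually (lt_mem_nhds (half_lt_self (abs_pos.2 hL)))
  have hbound : ∀ n ≥ N, |L| / 2 * β ^ n ≤ D * t n := fun n hn => by
    have hn := hN n hn
    rw [abs_div, abs_of_pos (pow_pos hβ n), lt_div_iff₀ (pow_pos hβ n)] at hn
    exact hn.le.trans (hst n)
  have hD : 0 < D :=
    pos_of_mul_pos_left (lt_of_lt_of_le (by positivity) (hbound N le_rfl)) (ht N)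
  refine ⟨|L| / 2 / D, by positivity, eventually_atTop.2 ⟨N, fun n hn => ?_⟩⟩
  rw [div_mul_eq_mul_div, div_le_iff₀ hD, mul_comm (t n)]
  exact hbound n hn

theorem canonical_height_nonzero_lower_degree_general {X : Type*} {k : ℕ}
    (f : Fin k → X → X) (hX h : X → ℝ) (β C δ' a b : ℝ)
    (hβ : 0 < β) (hδ' : 0 ≤ δ') (hb : 0 ≤ b)
    (hX1 : ∀ Q : X, 1 ≤ hX Q)
    (hii : ∀ n : ℕ, ∀ Q : X, heightSum f hX n Q ≤ C * (k : ℝ) ^ n * δ' ^ n * hX Q)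
    (hiii : ∀ Q : X, |h Q| ≤ a * hX Q + b)
    (P : X) (L : ℝ)
    (hlim : Tendsto (fun n : ℕ => heightSum f h n P / β ^ n) atTop (𝓝 L))
    (hL : L ≠ 0) :
    β / (k : ℝ) ≤ Filter.liminf
      (fun n : ℕ => (1 / (k : ℝ)) * heightSum f hX n P ^ ((n : ℝ)⁻¹)) atTop := by
  have hbound : ∀ Q, |h Q| ≤ (a + b) * hX Q := fun Q => by nlinarith [hiii Q, hX1 Q]
  obtain ⟨c, hc, hlow⟩ := exists_pos_eventually_mul_pow_le hβ hlim hL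
    (abs_heightSum_le f hbound · P) (heightSum_nonneg f (fun Q => zero_le_one.trans (hX1 Q)) · P)
  have hA : 0 < C * hX P := by
    have h0 := hii 0 P
    simp only [heightSum_zero, pow_zero, mul_one] at h0
    linarith [hX1 P]
  have hup : ∀ n, heightSum f hX n P ≤ C * hX P * ((k : ℝ) * δ') ^ n := fun n =>
    (hii n P).trans_eq (by ring)
  simpa only [one_div_mul_eq_div] using le_liminf_const_mul_rpow_inv (d := 1 / (k : ℝ))
    (by positivity) hc hβ.le hA (by positivity) hlow (Eventually.of_forall hup)

/-- under the canonical-height hypotheses (i), (ii) together with the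
comparison (iii) `|h(Q)| ≤ a·hX(Q) + b`, if the canonical height
`ĥ(P) = lim β^{−n}·S_n(h, P)` of a point `P` is nonzero, then the lower arithmetic degree
of `P` is at least `β/k`: `liminf (1/k)·S_n(hX, P)^{1/n} ≥ β/k`. -/
theorem canonical_height_nonzero_lower_degree {X : Type*} {k : ℕ} (hk : 1 ≤ k)
    (f : Fin k → X → X) (hX h : X → ℝ) (β C₃ C δ' a b : ℝ)
    (hβ : 0 < β) (hC₃ : 0 ≤ C₃) (hC : 0 ≤ C) (hδ' : 0 ≤ δ') (ha : 0 ≤ a) (hb : 0 ≤ b)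
    (hlt : (k : ℝ) ^ 2 * δ' < β ^ 2)
    (hX1 : ∀ Q : X, 1 ≤ hX Q)
    (hi : ∀ Q : X, |(∑ i : Fin k, h (f i Q)) - β * h Q| ≤ C₃ * Real.sqrt (hX Q))
    (hii : ∀ n : ℕ, ∀ Q : X, heightSum f hX n Q ≤ C * (k : ℝ) ^ n * δ' ^ n * hX Q)
    (hiii : ∀ Q : X, |h Q| ≤ a * hX Q + b)
    (P : X) (L : ℝ)
    (hlim : Tendsto (fun n : ℕ => heightSum f h n P / β ^ n) atTop (𝓝 L))
    (hL : L ≠ 0) :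
    β / (k : ℝ) ≤ Filter.liminf
      (fun n : ℕ => (1 / (k : ℝ)) * heightSum f hX n P ^ ((n : ℝ)⁻¹)) atTop :=
  canonical_height_nonzero_lower_degree_general f hX h β C δ' a b hβ hδ' hb hX1 hii hiii P L hlim hL
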